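/- Let k ≥ 3 be an odd integer and let A, b be integers satisfying (k-2)A² - kb² = -2. Then A ≡ b (mod 2), the integers Z = (kb - (k-2)A)/2 and W = (A - b)/2 are well defined, and they satisfy Z² - k(k-2)W² = 1. -/
import Mathlib


theorem minus_two_to_pell_odd (k A b : ℤ) (hk : 3 ≤ k) (hodd : Odd k)
    (h : (k - 2) * A ^ 2 - k * b ^ 2 = -2) :
    A ≡ b [ZMOD 2] ∧ (2 : ℤ) ∣ (k * b - (k - 2) * A) ∧ (2 : ℤ) ∣ (A - b) ∧
      ((k * b - (k - 2) * A) / 2) ^ 2 - k * (k - 2) * ((A - b) / 2) ^ 2 = 1 := by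
  have hk2 : Odd (k - 2) := by
    obtain ⟨m, hm⟩ := hodd
    exact ⟨m - 1, by omega⟩
  have hne : ¬ Odd (-2 : ℤ) := by decide
  have hab : Even (A - b) := by
    rcases Int.even_or_odd A with hA | hA <;> rcases Int.even_or_odd b with hB | hB
    · exact hA.sub hB
    · exfalso
      have hA2 : Even (A ^ 2) := by rw [sq]; exact hA.mul_right A
      have : Odd ((k - 2) * A ^ 2 - k * b ^ 2) :=
        (Even.mul_left hA2 _).sub_odd (hodd.mul (hB.pow))
      rw [h] at this
      exact hne this
    · exfalso
      have hB2 : Even (b ^ 2) := by rw [sq]; exact hB.mul_right b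
      have : Odd ((k - 2) * A ^ 2 - k * b ^ 2) :=
        (hk2.mul (hA.pow)).sub_even (Even.mul_left hB2 _)
      rw [h] at this
      exact hne this
    · exact hA.sub_odd hB
  obtain ⟨w, hw⟩ := hab
  have hA : A = b + 2 * w := by omega
  subst hA
  have d1 : (2 : ℤ) ∣ (k * b - (k - 2) * (b + 2 * w)) := ⟨b - (k - 2) * w, by ring⟩
  have d2 : (2 : ℤ) ∣ (b + 2 * w - b) := ⟨w, by ring⟩
  refine ⟨Int.modEq_iff_dvd.mpr ⟨-w, by ring⟩, d1, d2, ?_⟩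
  have e1 : (k * b - (k - 2) * (b + 2 * w)) = 2 * (b - (k - 2) * w) := by ring
  have e2 : (b + 2 * w - b) = 2 * w := by ring
  rw [e1, e2, Int.mul_ediv_cancel_left _ two_ne_zero,
    Int.mul_ediv_cancel_left _ two_ne_zero]
  exact mul_left_cancel₀ two_ne_zero (by linear_combination -h)
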